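/- Let F : ℒⁿ → Fin be a special functor and let H be the directed graph whose edge set is ⨿_{i=0}^{n} F(i,i), vertex set ⨿_{i=1}^{n} F(i−1,i), with incidence maps induced by F(i,i) → F(i,i+1) (inputs) and F(i,i) → F(i−1,i) (outputs). Then H is connected (as an undirected graph) if and only if F(0,n) is a one-element set. -/

import Mathlib

/-!
STATEMENT 4: Let `F : ℒⁿ → Fin` be a special functor and let `H` be the directed graph
with edge set `⨿_{i=0}^{n} F(i,i)`, vertex set `⨿_{i=1}^{n} F(i−1,i)`, and incidence
given by the maps `F(i,i) → F(i,i+1)` (inputs) and `F(i,i) → F(i−1,i)` (outputs).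
Then `H` is connected (as an undirected graph) if and only if `F(0,n)` is a
one-element set.
-/

open CategoryTheory

/-- The poset ℒⁿ. -/
@[ext]
structure LObjN (n : ℕ) where
  i : ℕ
  j : ℕ
  hij : i ≤ j
  hn : j ≤ n

instance (n : ℕ) : PartialOrder (LObjN n) where
  le a b := b.i ≤ a.i ∧ a.j ≤ b.j
  le_refl a := ⟨le_refl _, le_refl _⟩
  le_trans a b c h₁ h₂ := ⟨le_trans h₂.1 h₁.1, le_trans h₁.2 h₂.2⟩
  le_antisymm a b h₁ h₂ := by
    ext
    · exact le_antisymm h₂.1 h₁.1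
    · exact le_antisymm h₁.2 h₂.2

/-- Special (pushout-preserving) functors `ℒⁿ → Fin`. -/
def Special {n : ℕ} (F : LObjN n ⥤ Type) : Prop :=
  ∀ ⦃a b c d : LObjN n⦄ (f : a ⟶ b) (g : a ⟶ c) (h : b ⟶ d) (k : c ⟶ d),
    IsPushout f g h k → IsPushout (F.map f) (F.map g) (F.map h) (F.map k)

/-- The object `(k,k)` of ℒⁿ: edges at level `k`. -/
def eObj (n : ℕ) (k : ℕ) (hk : k ≤ n) : LObjN n := ⟨k, k, le_refl k, hk⟩

/-- The object `(k,k+1)` of ℒⁿ: vertices at level `k+1`. -/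
def vObj (n : ℕ) (k : ℕ) (hk : k + 1 ≤ n) : LObjN n := ⟨k, k + 1, Nat.le_succ k, hk⟩

/-- The combined set of edges and vertices of the directed graph associated to the level
graph underlying `F`. -/
def El (n : ℕ) (F : LObjN n ⥤ Type) : Type :=
  (Σ k : {k : ℕ // k ≤ n}, F.obj (eObj n k.1 k.2)) ⊕
  (Σ k : {k : ℕ // k + 1 ≤ n}, F.obj (vObj n k.1 k.2))

/-- Incidence in the underlying directed graph: the edge `e ∈ F(i,i)` is incident to the
vertex `v ∈ F(k,k+1)` precisely when there is a morphism `(i,i) → (k,k+1)` in ℒⁿ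
(i.e. `k ≤ i ≤ k+1`) carrying `e` to `v`. -/
def Adj (n : ℕ) (F : LObjN n ⥤ Type) : El n F → El n F → Prop
  | Sum.inl ⟨i, e⟩, Sum.inr ⟨k, v⟩ =>
      ∃ h : eObj n i.1 i.2 ≤ vObj n k.1 k.2, F.map (homOfLE h) e = v
  | _, _ => False

/-- The underlying graph of `F` is connected: it is nonempty and any two of its
edges/vertices are joined by a zig-zag of incidences. -/
def Conn (n : ℕ) (F : LObjN n ⥤ Type) : Prop :=
  Nonempty (El n F) ∧
    ∀ x y : El n F, Relation.ReflTransGen (fun a b => Adj n F a b ∨ Adj n F b a) x y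

/-!
The map sending an edge or vertex to its image in `F(0,n)` is constant along incidences, so it
factors through the set of connected components. Since `F` is special, `F(0,j+1)` is the pushout
of `F(0,j) ← F(j,j) → F(j,j+1)`; by induction on `j`, every element of `F(0,j)` comes from an
edge or vertex of level at most `j`, and the component of such an element only depends on its
image in `F(0,j)`. Hence `F(0,n)` is in bijection with the set of connected components.
-/

open Relation

section Preorder

variable {α : Type*} [Preorder α]

lemma isPushout_homOfLE {a b c d : α} (hab : a ≤ b) (hac : a ≤ c) (hbd : b ≤ d) (hcd : c ≤ d)
    (hd : ∀ e, b ≤ e → c ≤ e → d ≤ e) :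
    IsPushout (homOfLE hab) (homOfLE hac) (homOfLE hbd) (homOfLE hcd) := by
  have w : CommSq (homOfLE hab) (homOfLE hac) (homOfLE hbd) (homOfLE hcd) :=
    ⟨Subsingleton.elim _ _⟩
  exact IsPushout.of_isColimit' w
    (Limits.PushoutCocone.IsColimit.mk w.w
      (fun s => homOfLE (hd s.pt (leOfHom s.inl) (leOfHom s.inr)))
      (fun _ => Subsingleton.elim _ _) (fun _ => Subsingleton.elim _ _)
      (fun _ _ _ _ => Subsingleton.elim _ _))

lemma map_homOfLE_map_homOfLE (F : α ⥤ Type*) {a b c : α} (hab : a ≤ b) (hbc : b ≤ c)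
    (x : F.obj a) :
    F.map (homOfLE hbc) (F.map (homOfLE hab) x) = F.map (homOfLE (hab.trans hbc)) x := by
  rw [← Functor.map_comp_apply, homOfLE_comp]

lemma map_homOfLE_self (F : α ⥤ Type*) {a : α} (h : a ≤ a) (x : F.obj a) :
    F.map (homOfLE h) x = x := by
  rw [Subsingleton.elim (homOfLE h) (𝟙 a), Functor.map_id_apply]

end Preorder

variable {n : ℕ}

def topObj (n j : ℕ) (hj : j ≤ n) : LObjN n := ⟨0, j, Nat.zero_le j, hj⟩

lemma isPushout_topObj_succ {j : ℕ} (hj : j ≤ n) (hj' : j + 1 ≤ n)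
    (h₁ : eObj n j hj ≤ topObj n j hj) (h₂ : eObj n j hj ≤ vObj n j hj')
    (h₃ : topObj n j hj ≤ topObj n (j + 1) hj') (h₄ : vObj n j hj' ≤ topObj n (j + 1) hj') :
    IsPushout (homOfLE h₁) (homOfLE h₂) (homOfLE h₃) (homOfLE h₄) :=
  isPushout_homOfLE h₁ h₂ h₃ h₄ fun _ hb hc => ⟨hb.1, hc.2⟩

namespace El

variable {F : LObjN n ⥤ Type}

def edge (k : ℕ) (hk : k ≤ n) (e : F.obj (eObj n k hk)) : El n F := Sum.inl ⟨⟨k, hk⟩, e⟩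

def vertex (k : ℕ) (hk : k + 1 ≤ n) (v : F.obj (vObj n k hk)) : El n F := Sum.inr ⟨⟨k, hk⟩, v⟩

def obj : El n F → LObjN n
  | Sum.inl ⟨k, _⟩ => eObj n k.1 k.2
  | Sum.inr ⟨k, _⟩ => vObj n k.1 k.2

def val : (x : El n F) → F.obj x.obj
  | Sum.inl ⟨_, e⟩ => e
  | Sum.inr ⟨_, v⟩ => v

lemma obj_j_le_obj_i_succ (x : El n F) : x.obj.j ≤ x.obj.i + 1 := by
  rcases x with ⟨k, _⟩ | ⟨k, _⟩
  · exact Nat.le_succ k.1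
  · exact le_rfl

lemma obj_le_topObj (x : El n F) : x.obj ≤ topObj n n le_rfl := by
  rcases x with ⟨k, _⟩ | ⟨k, _⟩
  · exact ⟨Nat.zero_le _, k.2⟩
  · exact ⟨Nat.zero_le _, k.2⟩

def toTop (x : El n F) : F.obj (topObj n n le_rfl) := F.map (homOfLE x.obj_le_topObj) x.val

theorem _root_.Adj.exists_map_eq {x y : El n F} (h : Adj n F x y) :
    ∃ hxy : x.obj ≤ y.obj, F.map (homOfLE hxy) x.val = y.val := by
  rcases x with _ | _ <;> rcases y with _ | _
  all_goals first | exact h.elim | exact h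

lemma toTop_eq_of_adj {x y : El n F} (h : Adj n F x y) : x.toTop = y.toTop := by
  obtain ⟨hxy, hy⟩ := h.exists_map_eq
  rw [toTop, toTop, ← hy, map_homOfLE_map_homOfLE]

lemma toTop_eq_of_reflTransGen {x y : El n F} (h : ReflTransGen (SymmGen (Adj n F)) x y) :
    x.toTop = y.toTop := by
  induction h with
  | refl => rfl
  | tail _ hyz ih => exact ih.trans (hyz.elim toTop_eq_of_adj fun h => (toTop_eq_of_adj h).symm)

lemma mk_eq_mk_vertex {k : ℕ} (hk : k + 1 ≤ n) (x : El n F) (h : x.obj ≤ vObj n k hk) :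
    Quot.mk (Adj n F) x = Quot.mk _ (vertex k hk (F.map (homOfLE h) x.val)) := by
  rcases x with ⟨⟨i, hi⟩, e⟩ | ⟨⟨k', hk'⟩, v⟩
  · exact Quot.sound ⟨h, rfl⟩
  · obtain rfl : k = k' := le_antisymm h.1 (Nat.le_of_succ_le_succ h.2)
    exact congrArg (fun v => Quot.mk _ (vertex k hk v)) (map_homOfLE_self F h v).symm

variable (hspec : Special F)
include hspec

theorem exists_map_eq_of_le_topObj (j : ℕ) (hj : j ≤ n) (t : F.obj (topObj n j hj)) :
    ∃ (x : El n F) (h : x.obj ≤ topObj n j hj), F.map (homOfLE h) x.val = t := by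
  induction j with
  | zero => exact ⟨edge 0 hj t, le_rfl, map_homOfLE_self F _ t⟩
  | succ j ih =>
    have hsq := hspec _ _ _ _ (isPushout_topObj_succ (Nat.le_of_succ_le hj) hj
      ⟨Nat.zero_le j, le_rfl⟩ ⟨le_rfl, Nat.le_succ j⟩ ⟨le_rfl, Nat.le_succ j⟩ ⟨Nat.zero_le j, le_rfl⟩)
    rcases Limits.Types.eq_or_eq_of_isPushout hsq t with ⟨s, rfl⟩ | ⟨v, rfl⟩
    · obtain ⟨x, h, rfl⟩ := ih (Nat.le_of_succ_le hj) s
      exact ⟨x, _, (map_homOfLE_map_homOfLE F _ _ _).symm⟩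
    · exact ⟨vertex j hj v, _, rfl⟩

theorem exists_desc_topObj (j : ℕ) (hj : j ≤ n) :
    ∃ q : F.obj (topObj n j hj) → Quot (Adj n F),
      ∀ (x : El n F) (h : x.obj ≤ topObj n j hj), q (F.map (homOfLE h) x.val) = Quot.mk _ x := by
  induction j with
  | zero =>
    refine ⟨fun t => Quot.mk _ (edge 0 hj t), ?_⟩
    rintro (⟨⟨i, hi⟩, e⟩ | ⟨⟨k, hk⟩, v⟩) h
    · obtain rfl : i = 0 := Nat.le_zero.1 h.2
      exact congrArg (fun e => Quot.mk _ (edge 0 hj e)) (map_homOfLE_self F h e)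
    · exact absurd h.2 (Nat.not_succ_le_zero k)
  | succ j ih =>
    have hj' := Nat.le_of_succ_le hj
    obtain ⟨q, hq⟩ := ih hj'
    have h₁ : eObj n j hj' ≤ topObj n j hj' := ⟨Nat.zero_le j, le_rfl⟩
    have h₂ : eObj n j hj' ≤ vObj n j hj := ⟨le_rfl, Nat.le_succ j⟩
    have h₃ : topObj n j hj' ≤ topObj n (j + 1) hj := ⟨le_rfl, Nat.le_succ j⟩
    have h₄ : vObj n j hj ≤ topObj n (j + 1) hj := ⟨Nat.zero_le j, le_rfl⟩
    have hsq := hspec _ _ _ _ (isPushout_topObj_succ hj' hj h₁ h₂ h₃ h₄)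
    have w : F.map (homOfLE h₁) ≫ TypeCat.ofHom q =
        F.map (homOfLE h₂) ≫ TypeCat.ofHom fun v => Quot.mk _ (vertex j hj v) := by
      ext e
      exact (hq (edge j hj' e) h₁).trans (mk_eq_mk_vertex hj (edge j hj' e) h₂)
    refine ⟨hsq.desc _ _ w, fun x h => ?_⟩
    by_cases hxj : x.obj.j ≤ j
    · rw [← map_homOfLE_map_homOfLE F (show x.obj ≤ topObj n j hj' from ⟨Nat.zero_le _, hxj⟩) h₃]
      exact (ConcreteCategory.congr_hom (hsq.inl_desc _ _ w) _).trans (hq x _)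
    · have hxv : x.obj ≤ vObj n j hj := by
        have hxj' : x.obj.j ≤ j + 1 := h.2
        have := x.obj_j_le_obj_i_succ
        exact ⟨show j ≤ x.obj.i by omega, h.2⟩
      rw [← map_homOfLE_map_homOfLE F hxv h₄, mk_eq_mk_vertex hj x hxv]
      exact ConcreteCategory.congr_hom (hsq.inr_desc _ _ w) _

lemma toTop_surjective : Function.Surjective (toTop (F := F)) := fun t => by
  obtain ⟨x, _, hx⟩ := exists_map_eq_of_le_topObj hspec n le_rfl t
  exact ⟨x, hx⟩

lemma toTop_eq_toTop_iff {x y : El n F} :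
    x.toTop = y.toTop ↔ ReflTransGen (SymmGen (Adj n F)) x y := by
  refine ⟨fun hxy => ?_, toTop_eq_of_reflTransGen⟩
  obtain ⟨q, hq⟩ := exists_desc_topObj hspec n le_rfl
  have hmk : Quot.mk (Adj n F) x = Quot.mk _ y := by
    rw [← hq x x.obj_le_topObj, ← hq y y.obj_le_topObj]
    exact congrArg q hxy
  rw [EqvGen.reflTransGen_symmGen]
  exact Quot.eqvGen_exact hmk

end El

theorem stmt4_general (n : ℕ) (F : LObjN n ⥤ Type)
    (hspec : Special F) :
    Conn n F ↔ ∃ z : F.obj ⟨0, n, Nat.zero_le n, le_refl n⟩,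
      ∀ y : F.obj ⟨0, n, Nat.zero_le n, le_refl n⟩, y = z := by
  constructor
  · rintro ⟨⟨x₀⟩, hconn⟩
    refine ⟨x₀.toTop, fun y => ?_⟩
    obtain ⟨x, rfl⟩ := El.toTop_surjective hspec y
    exact (El.toTop_eq_toTop_iff hspec).2 (hconn x x₀)
  · rintro ⟨z, hz⟩
    obtain ⟨x₀, -⟩ := El.toTop_surjective hspec z
    exact ⟨⟨x₀⟩, fun x y => (El.toTop_eq_toTop_iff hspec).1 ((hz _).trans (hz _).symm)⟩

theorem stmt4 (n : ℕ) (F : LObjN n ⥤ Type) (hfin : ∀ a : LObjN n, Finite (F.obj a))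
    (hspec : Special F) :
    Conn n F ↔ ∃ z : F.obj ⟨0, n, Nat.zero_le n, le_refl n⟩,
      ∀ y : F.obj ⟨0, n, Nat.zero_le n, le_refl n⟩, y = z :=
  stmt4_general n F hspec
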